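/- Let η∈ℝ, ξ>-1 and γ>0. Then there is a constant C such that uniformly in q∈(0,2]: ∫_0^1 ( ∫_0^1 t^{2γ-1}/((t+s)²+q)^{η} dt )^{1/2} s^{ξ} ds ≤ C·q^{-(η-ξ-γ-1)/2} if η-ξ-γ>1, and ∫_0^1 ( ∫_0^1 t^{2γ-1}/((t+s)²+q)^{η} dt )^{1/2} s^{ξ} ds ≤ C·log(4/q) if η-ξ-γ≤1. -/

import Mathlib

noncomputable section

open MeasureTheory Real Set Filter
open scoped ENNReal Topology

namespace JacobiPaper

/-- Lebesgue measure on the interval `(0, π)`. -/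
def μ0 : Measure ℝ := volume.restrict (Ioo 0 π)

/-- The Jacobi eigenvalues `λ_n^{α,β} = (n + (α+β+1)/2)^2`. -/
def lam (α β : ℝ) (n : ℕ) : ℝ := ((n : ℝ) + (α + β + 1) / 2) ^ 2

/-- `Ψ^{α,β}(θ) = (sin(θ/2))^(α+1/2) (cos(θ/2))^(β+1/2)`. -/
def Psi (α β θ : ℝ) : ℝ := sin (θ / 2) ^ (α + 1 / 2) * cos (θ / 2) ^ (β + 1 / 2)

/-- `φ` is the system of Jacobi trigonometric functions `φ_n^{α,β}`:
`φ_n = Ψ^{α,β} · (c_n P_n^{α,β}(cos θ))` on `(0,π)` with `c_n > 0`, and the system is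
orthonormal in `L²(0,π)`.  These properties determine the system uniquely. -/
structure IsJacobiSystem (α β : ℝ) (φ : ℕ → ℝ → ℝ) : Prop where
  meas : ∀ n, Measurable (φ n)
  form : ∀ n : ℕ, ∃ P : Polynomial ℝ, P.natDegree = n ∧ 0 < P.leadingCoeff ∧
    ∀ θ ∈ Ioo (0 : ℝ) π, φ n θ = Psi α β θ * P.eval (cos θ)
  ortho : ∀ n m : ℕ, ∫ θ, φ n θ * φ m θ ∂μ0 = if n = m then 1 else 0

/-- The Fourier–Jacobi coefficient `a_n^{α,β}(f)`. -/
def coeffJ (φ : ℕ → ℝ → ℝ) (f : ℝ → ℂ) (n : ℕ) : ℂ := ∫ θ, f θ * (φ n θ : ℂ) ∂μ0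

/-- The Poisson–Jacobi semigroup `H_t^{α,β} f(θ)`. -/
def poisson (α β : ℝ) (φ : ℕ → ℝ → ℝ) (f : ℝ → ℂ) (t θ : ℝ) : ℂ :=
  ∑' n : ℕ, Real.exp (-(t * Real.sqrt (lam α β n))) • (coeffJ φ f n * (φ n θ : ℂ))

/-- Caputo-type fractional derivative `∂_t^γ F` of order `γ`, with `m = ⌊γ⌋ + 1`. -/
def caputo (γ : ℝ) (F : ℝ → ℂ) (t : ℝ) : ℂ :=
  (Real.Gamma ((⌊γ⌋₊ : ℝ) + 1 - γ))⁻¹ •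
    ∫ s in Ioi (0 : ℝ), s ^ ((⌊γ⌋₊ : ℝ) - γ) • iteratedDeriv (⌊γ⌋₊ + 1) F (t + s)

/-- The fractional square function `𝔤_{α,β}^γ(f)`. -/
def gSq (α β γ : ℝ) (φ : ℕ → ℝ → ℝ) (f : ℝ → ℂ) (θ : ℝ) : ℝ :=
  Real.sqrt (∫ t in Ioi (0 : ℝ),
    ‖caputo γ (fun u => poisson α β φ f u θ) t‖ ^ 2 * t ^ (2 * γ - 1))

/-- The fractional square function `𝔤_{α,β}^{γ,k}(f)`. -/
def gSqK (α β γ : ℝ) (k : ℕ) (φ : ℕ → ℝ → ℝ) (f : ℝ → ℂ) (θ : ℝ) : ℝ :=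
  Real.sqrt (∫ t in Ioi (0 : ℝ),
    ‖iteratedDeriv k (fun u => poisson α β φ f u θ) t‖ ^ 2 * t ^ (2 * ((k : ℝ) - γ) - 1))

/-- The modified fractional square function `𝔤̃_{α,β}^{γ,k}(f)`, built on `e^{-t}H_t^{α,β}`. -/
def gSqTildeK (α β γ : ℝ) (k : ℕ) (φ : ℕ → ℝ → ℝ) (f : ℝ → ℂ) (θ : ℝ) : ℝ :=
  Real.sqrt (∫ t in Ioi (0 : ℝ),
    ‖iteratedDeriv k (fun u => Real.exp (-u) • poisson α β φ f u θ) t‖ ^ 2 *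
      t ^ (2 * ((k : ℝ) - γ) - 1))

/-- `p(α,β) = -1/min(α+1/2, β+1/2)` (relevant when `min(α+1/2,β+1/2) < 0`). -/
def pMaxR (α β : ℝ) : ℝ := -1 / min (α + 1 / 2) (β + 1 / 2)

/-- `p ∈ E(α,β) = (p'(α,β), p(α,β))`. -/
def memE (α β p : ℝ) : Prop :=
  if -(1 / 2) ≤ α ∧ -(1 / 2) ≤ β then 1 < p
  else pMaxR α β / (pMaxR α β - 1) < p ∧ p < pMaxR α β

/-- `q < p(α,β)`. -/
def ltPMax (α β q : ℝ) : Prop := ¬(-(1 / 2) ≤ α ∧ -(1 / 2) ≤ β) → q < pMaxR α β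

/-- Eigenvalues of the potential operator: `λ_n^{-σ}` when `α+β ≠ -1` and `(1+λ_n)^{-σ}`
when `α+β = -1`. -/
def potEig (α β σ : ℝ) (n : ℕ) : ℝ :=
  (if α + β = -1 then 1 + lam α β n else lam α β n) ^ (-σ)

def cotHalf (θ : ℝ) : ℝ := cos (θ / 2) / sin (θ / 2)

/-- `g` is the weak (distributional) derivative of `f` on `(0,π)`. -/
def HasWeakDeriv (f g : ℝ → ℂ) : Prop :=
  ∀ ψ : ℝ → ℝ, ContDiff ℝ (⊤ : ℕ∞) ψ → HasCompactSupport ψ → tsupport ψ ⊆ Ioo 0 π →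
    ∫ θ, f θ * ((deriv ψ θ : ℝ) : ℂ) ∂μ0 = -∫ θ, g θ * (ψ θ : ℂ) ∂μ0

/-- `g = D_{α,β} f` in the weak sense, where
`D_{α,β} = d/dθ - ((2α+1)/4)cot(θ/2) + ((2β+1)/4)tan(θ/2)`. -/
def HasJacobiD (α β : ℝ) (f g : ℝ → ℂ) : Prop :=
  ∃ f' : ℝ → ℂ, HasWeakDeriv f f' ∧
    g =ᵐ[μ0] fun θ =>
      f' θ - ((2 * α + 1) / 4 * cotHalf θ) • f θ + ((2 * β + 1) / 4 * Real.tan (θ / 2)) • f θ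

/-- `g = D^{(k)} f = D_{α+k-1,β+k-1} ∘ ⋯ ∘ D_{α,β} f` in the weak sense. -/
def HasDIter (α β : ℝ) : ℕ → (ℝ → ℂ) → (ℝ → ℂ) → Prop
  | 0, f, g => g =ᵐ[μ0] f
  | (k + 1), f, g => ∃ h, HasDIter α β k f h ∧ HasJacobiD (α + k) (β + k) h g

/-- The eigenvalue coefficient of the Riesz–Jacobi transform `R_{α,β}^k`:
`R^k φ_n^{α,β} = rieszCoeff α β k n · φ_{n-k}^{α+k,β+k}`. -/
def rieszCoeff (α β : ℝ) (k n : ℕ) : ℝ :=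
  (-1 : ℝ) ^ k *
    (∏ j ∈ Finset.range k, Real.sqrt (lam α β n - ((α + β + 1) / 2 + (j : ℝ)) ^ 2)) *
    potEig α β ((k : ℝ) / 2) n

/-- Solution of the Schrödinger-type equation: `exp(itL_{α,β})f(θ)`. -/
def schrodinger (α β : ℝ) (φ : ℕ → ℝ → ℝ) (f : ℝ → ℂ) (t θ : ℝ) : ℂ :=
  ∑' n : ℕ, Complex.exp (Complex.I * ((t * lam α β n : ℝ) : ℂ)) * (coeffJ φ f n * (φ n θ : ℂ))

/-! Jacobi trigonometric polynomial setting. -/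

/-- The measure `dμ_{α,β}(θ) = (sin(θ/2))^{2α+1} (cos(θ/2))^{2β+1} dθ` on `(0,π)`. -/
def μJ (α β : ℝ) : Measure ℝ :=
  (volume.restrict (Ioo 0 π)).withDensity fun θ =>
    ENNReal.ofReal (sin (θ / 2) ^ (2 * α + 1) * cos (θ / 2) ^ (2 * β + 1))

/-- `Pn` is the system of normalized Jacobi trigonometric polynomials `Pn_n^{α,β}`. -/
structure IsJacobiPolySystem (α β : ℝ) (Pn : ℕ → ℝ → ℝ) : Prop where
  form : ∀ n : ℕ, ∃ P : Polynomial ℝ, P.natDegree = n ∧ 0 < P.leadingCoeff ∧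
    ∀ θ : ℝ, Pn n θ = P.eval (cos θ)
  ortho : ∀ n m : ℕ, ∫ θ, Pn n θ * Pn m θ ∂(μJ α β) = if n = m then 1 else 0

/-- `⟨f, Pn_n^{α,β}⟩_{dμ_{α,β}}`. -/
def coeffP (α β : ℝ) (Pn : ℕ → ℝ → ℝ) (f : ℝ → ℂ) (n : ℕ) : ℂ :=
  ∫ θ, f θ * (Pn n θ : ℂ) ∂(μJ α β)

/-- The Jacobi–Poisson semigroup `ℋ_t^{α,β} f(θ)` in the polynomial setting. -/
def poissonP (α β : ℝ) (Pn : ℕ → ℝ → ℝ) (f : ℝ → ℂ) (t θ : ℝ) : ℂ :=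
  ∑' n : ℕ, Real.exp (-(t * Real.sqrt (lam α β n))) • (coeffP α β Pn f n * (Pn n θ : ℂ))

/-- The vertical fractional square function `g_{α,β}^γ(f)` in the polynomial setting. -/
def gSqP (α β γ : ℝ) (Pn : ℕ → ℝ → ℝ) (f : ℝ → ℂ) (θ : ℝ) : ℝ :=
  Real.sqrt (∫ t in Ioi (0 : ℝ),
    ‖caputo γ (fun u => poissonP α β Pn f u θ) t‖ ^ 2 * t ^ (2 * γ - 1))

/-- The interval (ball) `B(θ, r)`. -/
def ballI (θ r : ℝ) : Set ℝ := Ioo (θ - r) (θ + r)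

/-- The weighted measure `w dμ_{α,β}`. -/
def wMeasure (α β : ℝ) (w : ℝ → ℝ) : Measure ℝ :=
  (μJ α β).withDensity fun x => ENNReal.ofReal (w x)

/-- The Muckenhoupt class `A_p^{α,β}`, `1 < p < ∞`, on the space of homogeneous type
`((0,π), dμ_{α,β}, |·|)`. -/
def IsApWeight (α β p : ℝ) (w : ℝ → ℝ) : Prop :=
  ∃ C : ℝ, 0 < C ∧ ∀ θ ∈ Ioo (0 : ℝ) π, ∀ r : ℝ, 0 < r →
    (∫ x in ballI θ r, w x ∂(μJ α β)) *
      (∫ x in ballI θ r, w x ^ (-(1 / (p - 1))) ∂(μJ α β)) ^ (p - 1) ≤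
      C * ((μJ α β (ballI θ r)).toReal) ^ p

/-- The Muckenhoupt class `A_1^{α,β}` on `((0,π), dμ_{α,β}, |·|)`. -/
def IsA1Weight (α β : ℝ) (w : ℝ → ℝ) : Prop :=
  ∃ C : ℝ, 0 < C ∧ ∀ θ ∈ Ioo (0 : ℝ) π, ∀ r : ℝ, 0 < r →
    ∀ᵐ y ∂(μJ α β), y ∈ ballI θ r →
      ∫ x in ballI θ r, w x ∂(μJ α β) ≤ C * (μJ α β (ballI θ r)).toReal * w y

/-- Caputo-type fractional derivative for real-valued functions. -/
def caputoR (γ : ℝ) (F : ℝ → ℝ) (t : ℝ) : ℝ :=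
  (Real.Gamma ((⌊γ⌋₊ : ℝ) + 1 - γ))⁻¹ *
    ∫ s in Ioi (0 : ℝ), s ^ ((⌊γ⌋₊ : ℝ) - γ) * iteratedDeriv (⌊γ⌋₊ + 1) F (t + s)

/-- The Jacobi–Poisson kernel `ℋ_t^{α,β}(θ,ψ)`. -/
def kernelP (α β : ℝ) (Pn : ℕ → ℝ → ℝ) (t θ ψ : ℝ) : ℝ :=
  ∑' n : ℕ, Real.exp (-(t * Real.sqrt (lam α β n))) * Pn n θ * Pn n ψ

/-- `L²(t^{2γ-1} dt)`-norm of `{∂_t^γ ℋ_t^{α,β}(θ,ψ)}_{t>0}`. -/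
def kernelBNorm (α β γ : ℝ) (Pn : ℕ → ℝ → ℝ) (θ ψ : ℝ) : ℝ :=
  Real.sqrt (∫ t in Ioi (0 : ℝ),
    (caputoR γ (fun u => kernelP α β Pn u θ ψ) t) ^ 2 * t ^ (2 * γ - 1))

/-- `L²(t^{2γ-1} dt)`-norm of `{∂_θ ∂_t^γ ℋ_t^{α,β}(θ,ψ)}_{t>0}`. -/
def kernelBNormDθ (α β γ : ℝ) (Pn : ℕ → ℝ → ℝ) (θ ψ : ℝ) : ℝ :=
  Real.sqrt (∫ t in Ioi (0 : ℝ),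
    (deriv (fun θ' => caputoR γ (fun u => kernelP α β Pn u θ' ψ) t) θ) ^ 2 * t ^ (2 * γ - 1))

/-- `L²(t^{2γ-1} dt)`-norm of `{∂_ψ ∂_t^γ ℋ_t^{α,β}(θ,ψ)}_{t>0}`. -/
def kernelBNormDψ (α β γ : ℝ) (Pn : ℕ → ℝ → ℝ) (θ ψ : ℝ) : ℝ :=
  Real.sqrt (∫ t in Ioi (0 : ℝ),
    (deriv (fun ψ' => caputoR γ (fun u => kernelP α β Pn u θ ψ') t) ψ) ^ 2 * t ^ (2 * γ - 1))

/-! Fourier coefficients on the circle, for Wainger's inequality. -/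

/-- The `k`-th Fourier coefficient `F̂(k)` of a function on `(0,2π)`. -/
def fCoeff (F : ℝ → ℂ) (k : ℤ) : ℂ :=
  (2 * π)⁻¹ • ∫ t in Ioo (0 : ℝ) (2 * π), F t * Complex.exp (-(Complex.I * k * t))

/-- Symmetric partial sums of the Wainger multiplier series. -/
def waingerSum (r q : ℝ) (F : ℝ → ℂ) (N : ℕ) (t : ℝ) : ℂ :=
  ∑ k ∈ Finset.Icc (-(N : ℤ)) (N : ℤ),
    if k = 0 then 0 else
      (|(k : ℝ)| ^ (-(1 / r) + 1 / q)) • (fCoeff F k * Complex.exp (Complex.I * k * t))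


section
open intervalIntegral

lemma aux_intOn_rpow {p : ℝ} (hp : -1 < p) :
    IntegrableOn (fun t : ℝ => t ^ p) (Ioo 0 1) := by
  have h := intervalIntegrable_rpow' (r := p) (a := (0:ℝ)) (b := 1) hp
  rwa [intervalIntegrable_iff_integrableOn_Ioo_of_le zero_le_one] at h

lemma aux_integral_rpow01 {p : ℝ} (hp : -1 < p) :
    ∫ t in Ioo (0:ℝ) 1, t ^ p = 1 / (p + 1) := by
  rw [← integral_Ioc_eq_integral_Ioo, ← integral_of_le zero_le_one,
    integral_rpow (Or.inl hp), Real.one_rpow,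
    Real.zero_rpow (by linarith : p + 1 ≠ 0)]
  ring

lemma aux_integral_rpow_Ioc {p : ℝ} (hp : -1 < p) {a : ℝ} (ha : 0 < a) :
    ∫ t in Ioc (0:ℝ) a, t ^ p = a ^ (p + 1) / (p + 1) := by
  rw [← integral_of_le ha.le, integral_rpow (Or.inl hp),
    Real.zero_rpow (by linarith : p + 1 ≠ 0)]
  ring

lemma aux_integral_inv_tail {a : ℝ} (ha : 0 < a) (ha4 : a ≤ 4) :
    ∫ t in Ioo (0:ℝ) 1 ∩ Ioi a, t ^ (-1:ℝ) ≤ Real.log (4 / a) := by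
  have hlog : 0 ≤ Real.log (4 / a) := Real.log_nonneg (by rw [le_div_iff₀ ha]; linarith)
  rcases le_or_gt 1 a with h1 | h1
  · have he : Ioo (0:ℝ) 1 ∩ Ioi a = ∅ := by
      ext x; simp only [mem_inter_iff, mem_Ioo, mem_Ioi, mem_empty_iff_false, iff_false]
      rintro ⟨⟨_, hx1⟩, hxa⟩; linarith
    rw [he]; simpa using hlog
  · have he : Ioo (0:ℝ) 1 ∩ Ioi a = Ioo a 1 := by
      ext x; simp only [mem_inter_iff, mem_Ioo, mem_Ioi]
      constructor
      · rintro ⟨⟨_, hx1⟩, hxa⟩; exact ⟨hxa, hx1⟩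
      · rintro ⟨hxa, hx1⟩; exact ⟨⟨ha.trans hxa, hx1⟩, hxa⟩
    have hval : ∫ t in Ioo a 1, t ^ (-1:ℝ) = Real.log (1 / a) := by
      have : ∀ t ∈ Ioo a 1, t ^ (-1:ℝ) = t⁻¹ := fun t ht => Real.rpow_neg_one t
      rw [setIntegral_congr_fun measurableSet_Ioo this, ← integral_Ioc_eq_integral_Ioo,
        ← integral_of_le h1.le,
        integral_inv (by
          simp only [uIcc_of_le h1.le, mem_Icc, not_and, not_le]
          intro h; linarith)]
    rw [he, hval]
    apply Real.log_le_log (by positivity)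
    gcongr
    norm_num

lemma aux_intOn_rpow_Ioc {p : ℝ} (hp : -1 < p) {a : ℝ} (ha : 0 < a) :
    IntegrableOn (fun t : ℝ => t ^ p) (Ioc 0 a) := by
  have h := intervalIntegrable_rpow' (r := p) (a := (0:ℝ)) (b := a) hp
  rwa [intervalIntegrable_iff_integrableOn_Ioc_of_le ha.le] at h

lemma aux_measurable (E r p : ℝ) : Measurable (fun t : ℝ => (t + r) ^ E * t ^ p) := by
  measurability

lemma aux_shift_bound {E r : ℝ} (hr : 0 < r) (hr4 : r ≤ 4) {t : ℝ} (ht : 0 < t) (ht1 : t ≤ 1) :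
    (t + r) ^ E ≤ r ^ E + 5 ^ E := by
  rcases le_or_gt E 0 with hE | hE
  · have h1 := Real.rpow_le_rpow_of_nonpos hr (by linarith : r ≤ t + r) hE
    have h5 : (0:ℝ) ≤ (5:ℝ) ^ E := Real.rpow_nonneg (by norm_num) E
    linarith
  · have h1 : (t+r) ^ E ≤ (5:ℝ) ^ E :=
      Real.rpow_le_rpow (by positivity) (by linarith) hE.le
    have hr' : (0:ℝ) ≤ r ^ E := Real.rpow_nonneg hr.le E
    linarith

lemma aux_integrableOn_shift {p E r : ℝ} (hp : -1 < p) (hr : 0 < r) (hr4 : r ≤ 4) :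
    IntegrableOn (fun t : ℝ => (t + r) ^ E * t ^ p) (Ioo 0 1) := by
  apply Integrable.mono' ((aux_intOn_rpow hp).const_mul (r ^ E + 5 ^ E))
  · exact (aux_measurable E r p).aestronglyMeasurable
  · filter_upwards [ae_restrict_mem measurableSet_Ioo] with t ht
    have h1 : 0 < t + r := by have := ht.1; linarith
    rw [Real.norm_eq_abs, abs_of_nonneg
      (mul_nonneg (Real.rpow_nonneg h1.le _) (Real.rpow_nonneg ht.1.le _))]
    exact mul_le_mul_of_nonneg_right (aux_shift_bound hr hr4 ht.1 ht.2.le)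
      (Real.rpow_nonneg ht.1.le p)

lemma aux_split_S1 {p E r : ℝ} (hp : -1 < p) (hE : E ≤ 0) (hr : 0 < r) (hr4 : r ≤ 4) :
    ∫ t in Ioo (0:ℝ) 1 ∩ Iic r, (t + r) ^ E * t ^ p ≤ r ^ E * (r ^ (p+1) / (p+1)) := by
  have hf := aux_integrableOn_shift hp hr hr4 (E := E)
  calc ∫ t in Ioo (0:ℝ) 1 ∩ Iic r, (t+r)^E * t^p
      ≤ ∫ t in Ioo (0:ℝ) 1 ∩ Iic r, r ^ E * t ^ p := by
        apply setIntegral_mono_on (hf.mono_set inter_subset_left)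
          (IntegrableOn.mono_set ((aux_intOn_rpow hp).const_mul _) inter_subset_left)
          (measurableSet_Ioo.inter measurableSet_Iic)
        intro t ht
        exact mul_le_mul_of_nonneg_right
          (Real.rpow_le_rpow_of_nonpos hr (by linarith [ht.1.1]) hE)
          (Real.rpow_nonneg ht.1.1.le p)
    _ ≤ ∫ t in Ioc (0:ℝ) r, r ^ E * t ^ p := by
        apply setIntegral_mono_set ((aux_intOn_rpow_Ioc hp hr).const_mul _)
        · filter_upwards [ae_restrict_mem measurableSet_Ioc] with t ht
          exact mul_nonneg (Real.rpow_nonneg hr.le _) (Real.rpow_nonneg ht.1.le _)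
        · exact HasSubset.Subset.eventuallyLE (fun x hx => ⟨hx.1.1, hx.2⟩)
    _ = r ^ E * (r ^ (p+1) / (p+1)) := by
        rw [MeasureTheory.integral_const_mul, aux_integral_rpow_Ioc hp hr]

lemma aux_split_S2_lt {p E r : ℝ} (hp : -1 < p) (hE : E ≤ 0) (hsum : E + p < -1)
    (hr : 0 < r) (hr4 : r ≤ 4) :
    ∫ t in Ioo (0:ℝ) 1 ∩ Ioi r, (t + r) ^ E * t ^ p ≤ r ^ (E+p+1) / (-(E+p+1)) := by
  have hf := aux_integrableOn_shift hp hr hr4 (E := E)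
  calc ∫ t in Ioo (0:ℝ) 1 ∩ Ioi r, (t+r)^E * t^p
      ≤ ∫ t in Ioo (0:ℝ) 1 ∩ Ioi r, t ^ (E+p) := by
        apply setIntegral_mono_on (hf.mono_set inter_subset_left)
          ((integrableOn_Ioi_rpow_of_lt hsum hr).mono_set inter_subset_right)
          (measurableSet_Ioo.inter measurableSet_Ioi)
        intro t ht
        have ht0 : 0 < t := ht.1.1
        rw [Real.rpow_add ht0]
        exact mul_le_mul_of_nonneg_right
          (Real.rpow_le_rpow_of_nonpos ht0 (by linarith) hE)
          (Real.rpow_nonneg ht0.le p)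
    _ ≤ ∫ t in Ioi r, t ^ (E+p) := by
        apply setIntegral_mono_set (integrableOn_Ioi_rpow_of_lt hsum hr)
        · filter_upwards [ae_restrict_mem measurableSet_Ioi] with t ht
          have h1 : r < t := ht
          exact Real.rpow_nonneg (by linarith) _
        · exact HasSubset.Subset.eventuallyLE inter_subset_right
    _ = r ^ (E+p+1) / (-(E+p+1)) := by
        rw [integral_Ioi_rpow_of_lt hsum hr, div_neg, neg_div]

lemma aux_split_union {p E r : ℝ} (hp : -1 < p) (hr : 0 < r) (hr4 : r ≤ 4) :
    ∫ t in Ioo (0:ℝ) 1, (t + r) ^ E * t ^ p =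
      (∫ t in Ioo (0:ℝ) 1 ∩ Iic r, (t + r) ^ E * t ^ p) +
      ∫ t in Ioo (0:ℝ) 1 ∩ Ioi r, (t + r) ^ E * t ^ p := by
  have hf := aux_integrableOn_shift hp hr hr4 (E := E)
  rw [← setIntegral_union (Disjoint.mono inter_subset_right inter_subset_right
      (Iic_disjoint_Ioi le_rfl)) (measurableSet_Ioo.inter measurableSet_Ioi)
      (hf.mono_set inter_subset_left) (hf.mono_set inter_subset_left),
    ← inter_union_distrib_left, Iic_union_Ioi, inter_univ]

lemma aux_master_lt {p E r : ℝ} (hp : -1 < p) (hE : E ≤ 0) (hsum : E + p < -1)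
    (hr : 0 < r) (hr4 : r ≤ 4) :
    ∫ t in Ioo (0:ℝ) 1, (t + r) ^ E * t ^ p ≤
      (1 / (p + 1) + 1 / (-(E + p + 1))) * r ^ (E + p + 1) := by
  rw [aux_split_union hp hr hr4]
  have h1 := aux_split_S1 hp hE hr hr4
  have h2 := aux_split_S2_lt hp hE hsum hr hr4
  have key : r ^ E * r ^ (p+1) = r ^ (E+p+1) := by
    rw [← Real.rpow_add hr]; ring_nf
  calc _ ≤ r ^ E * (r ^ (p+1) / (p+1)) + r ^ (E+p+1)/(-(E+p+1)) := add_le_add h1 h2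
    _ = (1/(p+1) + 1/(-(E+p+1))) * r ^ (E+p+1) := by
        rw [show r ^ E * (r^(p+1)/(p+1)) = (r^E * r^(p+1))/(p+1) by ring, key]; ring

lemma aux_master_eq {p E r : ℝ} (hp : -1 < p) (hE : E ≤ 0) (hsum : E + p = -1)
    (hr : 0 < r) (hr4 : r ≤ 4) :
    ∫ t in Ioo (0:ℝ) 1, (t + r) ^ E * t ^ p ≤ 1 / (p + 1) + Real.log (4 / r) := by
  rw [aux_split_union hp hr hr4]
  have h1 := aux_split_S1 hp hE hr hr4
  have key : r ^ E * r ^ (p+1) = 1 := by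
    rw [← Real.rpow_add hr, show E + (p+1) = 0 by linarith, Real.rpow_zero]
  have h1' : ∫ t in Ioo (0:ℝ) 1 ∩ Iic r, (t + r) ^ E * t ^ p ≤ 1/(p+1) := by
    calc _ ≤ r ^ E * (r ^ (p+1) / (p+1)) := h1
      _ = 1/(p+1) := by rw [show r ^ E * (r^(p+1)/(p+1)) = (r^E * r^(p+1))/(p+1) by ring, key]
  have hInt : IntegrableOn (fun t : ℝ => t ^ (-1:ℝ)) (Ioo (0:ℝ) 1 ∩ Ioi r) := by
    apply Integrable.mono' (g := fun _ => r⁻¹) (integrableOn_const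
      ((measure_mono inter_subset_left).trans_lt measure_Ioo_lt_top).ne)
    · apply Measurable.aestronglyMeasurable; measurability
    · filter_upwards [ae_restrict_mem (measurableSet_Ioo.inter measurableSet_Ioi)] with t ht
      rw [Real.norm_eq_abs, abs_of_nonneg (Real.rpow_nonneg ht.1.1.le _), Real.rpow_neg_one]
      exact inv_anti₀ hr (le_of_lt ht.2)
  have h2 : ∫ t in Ioo (0:ℝ) 1 ∩ Ioi r, (t+r)^E * t^p ≤ Real.log (4/r) := by
    calc _ ≤ ∫ t in Ioo (0:ℝ) 1 ∩ Ioi r, t ^ (-1:ℝ) := by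
          apply setIntegral_mono_on
            ((aux_integrableOn_shift hp hr hr4).mono_set inter_subset_left)
            hInt (measurableSet_Ioo.inter measurableSet_Ioi)
          intro t ht
          have ht0 : 0 < t := ht.1.1
          rw [show (-1:ℝ) = E + p from hsum.symm, Real.rpow_add ht0]
          exact mul_le_mul_of_nonneg_right
            (Real.rpow_le_rpow_of_nonpos ht0 (by linarith) hE) (Real.rpow_nonneg ht0.le p)
      _ ≤ Real.log (4/r) := aux_integral_inv_tail hr hr4
  linarith

lemma aux_master_gt {p E r : ℝ} (hp : -1 < p) (hE : E ≤ 0) (hsum : -1 < E + p) (hr : 0 < r) :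
    ∫ t in Ioo (0:ℝ) 1, (t + r) ^ E * t ^ p ≤ 1 / (E + p + 1) := by
  rw [← aux_integral_rpow01 hsum]
  apply integral_mono_of_nonneg ?_ (aux_intOn_rpow hsum) ?_
  · filter_upwards [ae_restrict_mem measurableSet_Ioo] with t ht
    have h1 : (0:ℝ) < t + r := by linarith [ht.1]
    exact mul_nonneg (Real.rpow_nonneg h1.le _) (Real.rpow_nonneg ht.1.le _)
  · filter_upwards [ae_restrict_mem measurableSet_Ioo] with t ht
    have ht0 : 0 < t := ht.1
    rw [Real.rpow_add ht0]
    exact mul_le_mul_of_nonneg_right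
      (Real.rpow_le_rpow_of_nonpos ht0 (by linarith) hE) (Real.rpow_nonneg ht0.le p)

lemma aux_sqrt_add {x y : ℝ} (hx : 0 ≤ x) (hy : 0 ≤ y) :
    Real.sqrt (x + y) ≤ Real.sqrt x + Real.sqrt y := by
  nlinarith [Real.sq_sqrt hx, Real.sq_sqrt hy, Real.sq_sqrt (by linarith : (0:ℝ) ≤ x + y),
    Real.sqrt_nonneg x, Real.sqrt_nonneg y, Real.sqrt_nonneg (x+y),
    mul_nonneg (Real.sqrt_nonneg x) (Real.sqrt_nonneg y)]

lemma aux_sqrt_le_one_add {x : ℝ} (hx : 0 ≤ x) : Real.sqrt x ≤ 1 + x := by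
  nlinarith [Real.sq_sqrt hx, Real.sqrt_nonneg x, sq_nonneg (Real.sqrt x - 1)]

lemma aux_kernel {η q t s : ℝ} (hq : 0 < q) (ht : 0 < t) (hs : 0 < s) :
    ((t+s)^2 + q) ^ (-η) ≤ 2 ^ |η| * (t + (s + Real.sqrt q)) ^ (-(2*η)) := by
  have hr : 0 < Real.sqrt q := Real.sqrt_pos.mpr hq
  set r := Real.sqrt q with hrdef
  have hq' : r ^ 2 = q := Real.sq_sqrt hq.le
  have hc : 0 < t + s + r := by linarith
  have hb : 0 < (t+s)^2 + q := by positivity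
  have h1 : (t+s)^2 + q ≤ (t+s+r)^2 := by nlinarith
  have h2 : (t+s+r)^2 ≤ 2 * ((t+s)^2 + q) := by nlinarith [sq_nonneg (t+s-r)]
  have hpow : ((t+s+r)^2 : ℝ) ^ (-η) = (t + (s+r)) ^ (-(2*η)) := by
    rw [← Real.rpow_natCast (t+s+r) 2, ← Real.rpow_mul hc.le,
      show ((2:ℕ):ℝ) * -η = -(2*η) by push_cast; ring,
      show t+s+r = t+(s+r) by ring]
  have hone : (1:ℝ) ≤ 2 ^ |η| := by
    rw [show (1:ℝ) = (2:ℝ) ^ (0:ℝ) from (Real.rpow_zero 2).symm]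
    exact Real.rpow_le_rpow_of_exponent_le one_le_two (abs_nonneg η)
  rcases le_or_gt 0 η with hη | hη
  · have habs : |η| = η := abs_of_nonneg hη
    have key : ((t+s)^2+q) ^ (-η) ≤ ((t+s+r)^2 / 2) ^ (-η) :=
      Real.rpow_le_rpow_of_nonpos (by positivity) (by linarith) (by linarith)
    have hinv : ((2:ℝ) ^ (-η))⁻¹ = 2 ^ η := by
      rw [← Real.rpow_neg (by norm_num : (0:ℝ) ≤ 2), neg_neg]
    have e2 : ((t+s+r)^2 / 2 : ℝ) ^ (-η) = 2 ^ η * ((t+s+r)^2) ^ (-η) := by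
      rw [Real.div_rpow (by positivity) (by norm_num : (0:ℝ) ≤ 2), div_eq_mul_inv, hinv]
      ring
    calc ((t+s)^2+q) ^ (-η) ≤ ((t+s+r)^2/2) ^ (-η) := key
      _ = 2 ^ η * ((t+s+r)^2) ^ (-η) := e2
      _ = 2 ^ |η| * (t + (s+r)) ^ (-(2*η)) := by rw [habs, hpow]
  · have key : ((t+s)^2+q) ^ (-η) ≤ ((t+s+r)^2) ^ (-η) :=
      Real.rpow_le_rpow hb.le h1 (by linarith)
    calc ((t+s)^2+q) ^ (-η) ≤ ((t+s+r)^2) ^ (-η) := key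
      _ = (t + (s+r)) ^ (-(2*η)) := hpow
      _ ≤ 2 ^ |η| * (t + (s+r)) ^ (-(2*η)) :=
          le_mul_of_one_le_left (Real.rpow_nonneg (by linarith) _) hone

lemma aux_sqrt4 {q : ℝ} (hq : 0 < q) (hq2 : q ≤ 2) : Real.sqrt q ≤ 2 := by
  rw [show (2:ℝ) = Real.sqrt 4 by
    rw [show (4:ℝ) = 2^2 by norm_num, Real.sqrt_sq (by norm_num : (0:ℝ) ≤ 2)]]
  exact Real.sqrt_le_sqrt (by linarith)

lemma aux_inner_le {γ η q s : ℝ} (hγ : 0 < γ) (hq : 0 < q) (hq2 : q ≤ 2)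
    (hs : 0 < s) (hs1 : s < 1) :
    (∫ t in Ioo (0:ℝ) 1, t ^ (2*γ-1) / ((t+s)^2 + q) ^ η) ≤
      2 ^ |η| * ∫ t in Ioo (0:ℝ) 1, (t + (s + Real.sqrt q)) ^ (-(2*η)) * t ^ (2*γ-1) := by
  have hr : 0 < Real.sqrt q := Real.sqrt_pos.mpr hq
  have hr2 : Real.sqrt q ≤ 2 := aux_sqrt4 hq hq2
  have ha : 0 < s + Real.sqrt q := by linarith
  have ha4 : s + Real.sqrt q ≤ 4 := by linarith
  rw [← MeasureTheory.integral_const_mul]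
  apply integral_mono_of_nonneg
  · filter_upwards [ae_restrict_mem measurableSet_Ioo] with t ht
    have hb : (0:ℝ) < ((t+s)^2 + q) ^ η := Real.rpow_pos_of_pos (by positivity) η
    exact div_nonneg (Real.rpow_nonneg ht.1.le _) hb.le
  · exact ((aux_integrableOn_shift (by linarith : (-1:ℝ) < 2*γ-1) ha ha4).const_mul _)
  · filter_upwards [ae_restrict_mem measurableSet_Ioo] with t ht
    have ht0 : 0 < t := ht.1
    have hb : (0:ℝ) < (t+s)^2 + q := by positivity
    rw [div_eq_mul_inv, ← Real.rpow_neg hb.le]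
    calc t ^ (2*γ-1) * ((t+s)^2+q) ^ (-η)
        ≤ t ^ (2*γ-1) * (2 ^ |η| * (t + (s + Real.sqrt q)) ^ (-(2*η))) :=
          mul_le_mul_of_nonneg_left (aux_kernel hq ht0 hs) (Real.rpow_nonneg ht0.le _)
      _ = 2 ^ |η| * ((t + (s + Real.sqrt q)) ^ (-(2*η)) * t ^ (2*γ-1)) := by ring

lemma aux_outer {ξ : ℝ} (hξ : -1 < ξ) {r : ℝ} (hr : 0 < r) (hr4 : r ≤ 4)
    {I : ℝ → ℝ} {M E : ℝ} (hM : 0 ≤ M) (hE : E ≤ 0)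
    (hpt : ∀ s, 0 < s → s < 1 → Real.sqrt (I s) ≤ M * (s + r) ^ E) :
    (∫ s in Ioo (0:ℝ) 1, Real.sqrt (I s) * s ^ ξ) ≤
      M * ∫ s in Ioo (0:ℝ) 1, (s + r) ^ E * s ^ ξ := by
  rw [← MeasureTheory.integral_const_mul]
  apply integral_mono_of_nonneg
  · filter_upwards [ae_restrict_mem measurableSet_Ioo] with s hs
    exact mul_nonneg (Real.sqrt_nonneg _) (Real.rpow_nonneg hs.1.le _)
  · exact ((aux_integrableOn_shift hξ hr hr4).const_mul _)
  · filter_upwards [ae_restrict_mem measurableSet_Ioo] with s hs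
    calc Real.sqrt (I s) * s ^ ξ ≤ (M * (s+r)^E) * s ^ ξ :=
        mul_le_mul_of_nonneg_right (hpt s hs.1 hs.2) (Real.rpow_nonneg hs.1.le _)
      _ = M * ((s+r)^E * s^ξ) := by ring

lemma aux_case1 (η ξ γ : ℝ) (hξ : -1 < ξ) (hγ : 0 < γ) (hcase : 1 < η - ξ - γ) :
    ∃ C : ℝ, 0 < C ∧ ∀ q : ℝ, 0 < q → q ≤ 2 →
      (∫ s in Ioo (0 : ℝ) 1,
          Real.sqrt (∫ t in Ioo (0 : ℝ) 1, t ^ (2 * γ - 1) / ((t + s) ^ 2 + q) ^ η) * s ^ ξ)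
        ≤ C * q ^ (-(η - ξ - γ - 1) / 2) := by
  have hηγ : γ < η := by linarith
  have hK1pos : 0 < 1/(2*γ-1+1) + 1/(-(-(2*η) + (2*γ-1) + 1)) := by
    apply add_pos (one_div_pos.mpr (by linarith)) (one_div_pos.mpr (by linarith))
  set K1 : ℝ := 1/(2*γ-1+1) + 1/(-(-(2*η) + (2*γ-1) + 1)) with hK1
  set M : ℝ := Real.sqrt (2 ^ |η|) * Real.sqrt K1 with hM
  have hMpos : 0 < M :=
    mul_pos (Real.sqrt_pos.mpr (Real.rpow_pos_of_pos two_pos _)) (Real.sqrt_pos.mpr hK1pos)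
  have hK2pos : 0 < 1/(ξ+1) + 1/(-((γ-η) + ξ + 1)) := by
    apply add_pos (one_div_pos.mpr (by linarith)) (one_div_pos.mpr (by linarith))
  set K2 : ℝ := 1/(ξ+1) + 1/(-((γ-η) + ξ + 1)) with hK2
  refine ⟨M * K2, mul_pos hMpos hK2pos, ?_⟩
  intro q hq hq2
  have hr : 0 < Real.sqrt q := Real.sqrt_pos.mpr hq
  have hr2 : Real.sqrt q ≤ 2 := aux_sqrt4 hq hq2
  -- pointwise bound
  have hpt : ∀ s, 0 < s → s < 1 →
      Real.sqrt (∫ t in Ioo (0:ℝ) 1, t ^ (2 * γ - 1) / ((t + s) ^ 2 + q) ^ η) ≤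
        M * (s + Real.sqrt q) ^ (γ - η) := by
    intro s hs hs1
    have ha : 0 < s + Real.sqrt q := by linarith
    have ha4 : s + Real.sqrt q ≤ 4 := by linarith
    have step1 := aux_inner_le hγ hq hq2 hs hs1 (η := η)
    have step2 := aux_master_lt (p := 2*γ-1) (E := -(2*η)) (r := s + Real.sqrt q)
      (by linarith) (by linarith) (by linarith) ha ha4
    have step3 : (∫ t in Ioo (0:ℝ) 1, t ^ (2 * γ - 1) / ((t + s) ^ 2 + q) ^ η) ≤
        2 ^ |η| * (K1 * (s + Real.sqrt q) ^ (-(2*η) + (2*γ-1) + 1)) := by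
      refine step1.trans ?_
      exact mul_le_mul_of_nonneg_left (by rw [hK1]; exact step2)
        (Real.rpow_nonneg (by norm_num) _)
    refine (Real.sqrt_le_sqrt step3).trans ?_
    rw [Real.sqrt_mul (Real.rpow_nonneg (by norm_num) _), Real.sqrt_mul hK1pos.le,
      Real.sqrt_eq_rpow ((s + Real.sqrt q) ^ (-(2*η) + (2*γ-1) + 1)),
      ← Real.rpow_mul ha.le, show (-(2*η) + (2*γ-1) + 1) * (1/2) = γ - η by ring, hM]
    exact le_of_eq (by ring)
  have houter := aux_outer hξ hr (by linarith) hMpos.le (by linarith : γ - η ≤ 0) hpt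
  have hmaster := aux_master_lt (p := ξ) (E := γ - η) (r := Real.sqrt q)
    hξ (by linarith) (by linarith) hr (by linarith)
  calc (∫ s in Ioo (0 : ℝ) 1,
          Real.sqrt (∫ t in Ioo (0 : ℝ) 1, t ^ (2 * γ - 1) / ((t + s) ^ 2 + q) ^ η) * s ^ ξ)
      ≤ M * ∫ s in Ioo (0:ℝ) 1, (s + Real.sqrt q) ^ (γ - η) * s ^ ξ := houter
    _ ≤ M * (K2 * Real.sqrt q ^ ((γ-η) + ξ + 1)) := by
        apply mul_le_mul_of_nonneg_left _ hMpos.le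
        rw [hK2]; exact hmaster
    _ = M * K2 * q ^ (-(η - ξ - γ - 1) / 2) := by
        rw [Real.sqrt_eq_rpow, ← Real.rpow_mul hq.le,
          show 1/2 * ((γ-η) + ξ + 1) = -(η - ξ - γ - 1) / 2 by ring]
        ring

lemma aux_master_pos {p E r : ℝ} (hp : -1 < p) (hE : 0 ≤ E) (hr : 0 < r) (hr4 : r ≤ 4) :
    ∫ t in Ioo (0:ℝ) 1, (t + r) ^ E * t ^ p ≤ 5 ^ E * (1 / (p + 1)) := by
  rw [← aux_integral_rpow01 hp, ← MeasureTheory.integral_const_mul]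
  apply integral_mono_of_nonneg
  · filter_upwards [ae_restrict_mem measurableSet_Ioo] with t ht
    have h1 : (0:ℝ) < t + r := by linarith [ht.1]
    exact mul_nonneg (Real.rpow_nonneg h1.le _) (Real.rpow_nonneg ht.1.le _)
  · exact (aux_intOn_rpow hp).const_mul _
  · filter_upwards [ae_restrict_mem measurableSet_Ioo] with t ht
    have ht0 : 0 < t := ht.1
    exact mul_le_mul_of_nonneg_right
      (Real.rpow_le_rpow (by linarith) (by linarith [ht.2] : t + r ≤ 5) hE)
      (Real.rpow_nonneg ht0.le p)

lemma aux_logconv {q D1 D2 : ℝ} (hq : 0 < q) (hq2 : q ≤ 2) (h1 : 0 ≤ D1) (h2 : 0 ≤ D2) :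
    D1 + D2 * Real.log (4 / Real.sqrt q) ≤
      (D1 / Real.log 2 + 2 * D2) * Real.log (4 / q) := by
  have hlog2 : 0 < Real.log 2 := Real.log_pos one_lt_two
  have hr : 0 < Real.sqrt q := Real.sqrt_pos.mpr hq
  have hlog4 : Real.log 4 = 2 * Real.log 2 := by
    rw [show (4:ℝ) = 2^2 by norm_num, Real.log_pow]; push_cast; ring
  have hlogq : Real.log q ≤ Real.log 2 := Real.log_le_log hq hq2
  have hA : Real.log 2 ≤ Real.log (4 / q) := by
    apply Real.log_le_log (by norm_num)
    rw [le_div_iff₀ hq]; linarith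
  have hB : Real.log (4 / Real.sqrt q) ≤ 2 * Real.log (4 / q) := by
    rw [Real.log_div (by norm_num) (ne_of_gt hr), Real.log_div (by norm_num) (ne_of_gt hq),
      Real.log_sqrt hq.le]
    linarith
  have e1 : D1 = (D1 / Real.log 2) * Real.log 2 := by field_simp
  calc D1 + D2 * Real.log (4 / Real.sqrt q)
      ≤ (D1 / Real.log 2) * Real.log (4/q) + D2 * (2 * Real.log (4/q)) := by
        apply add_le_add
        · calc D1 = D1 / Real.log 2 * Real.log 2 := e1
            _ ≤ D1 / Real.log 2 * Real.log (4/q) :=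
              mul_le_mul_of_nonneg_left hA (div_nonneg h1 hlog2.le)
        · exact mul_le_mul_of_nonneg_left hB h2
    _ = (D1 / Real.log 2 + 2 * D2) * Real.log (4 / q) := by ring

lemma aux_pt_lt {η γ : ℝ} (hγ : 0 < γ) (hηγ : γ < η) {q : ℝ} (hq : 0 < q) (hq2 : q ≤ 2) :
    ∀ s, 0 < s → s < 1 →
      Real.sqrt (∫ t in Ioo (0:ℝ) 1, t ^ (2 * γ - 1) / ((t + s) ^ 2 + q) ^ η) ≤
        (Real.sqrt (2 ^ |η|) *
            Real.sqrt (1/(2*γ-1+1) + 1/(-(-(2*η) + (2*γ-1) + 1)))) *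
          (s + Real.sqrt q) ^ (γ - η) := by
  have hK1pos : 0 < 1/(2*γ-1+1) + 1/(-(-(2*η) + (2*γ-1) + 1)) := by
    apply add_pos (one_div_pos.mpr (by linarith)) (one_div_pos.mpr (by linarith))
  have hr : 0 < Real.sqrt q := Real.sqrt_pos.mpr hq
  have hr2 : Real.sqrt q ≤ 2 := aux_sqrt4 hq hq2
  intro s hs hs1
  have ha : 0 < s + Real.sqrt q := by linarith
  have ha4 : s + Real.sqrt q ≤ 4 := by linarith
  have step1 := aux_inner_le hγ hq hq2 hs hs1 (η := η)
  have step2 := aux_master_lt (p := 2*γ-1) (E := -(2*η)) (r := s + Real.sqrt q)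
    (by linarith) (by linarith) (by linarith) ha ha4
  have step3 : (∫ t in Ioo (0:ℝ) 1, t ^ (2 * γ - 1) / ((t + s) ^ 2 + q) ^ η) ≤
      2 ^ |η| * ((1/(2*γ-1+1) + 1/(-(-(2*η) + (2*γ-1) + 1))) *
        (s + Real.sqrt q) ^ (-(2*η) + (2*γ-1) + 1)) := by
    refine step1.trans ?_
    exact mul_le_mul_of_nonneg_left step2 (Real.rpow_nonneg (by norm_num) _)
  refine (Real.sqrt_le_sqrt step3).trans ?_
  rw [Real.sqrt_mul (Real.rpow_nonneg (by norm_num) _), Real.sqrt_mul hK1pos.le,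
    Real.sqrt_eq_rpow ((s + Real.sqrt q) ^ (-(2*η) + (2*γ-1) + 1)),
    ← Real.rpow_mul ha.le, show (-(2*η) + (2*γ-1) + 1) * (1/2) = γ - η by ring]
  exact le_of_eq (by ring)

lemma aux_sqrt_inner {η γ q s : ℝ} (hγ : 0 < γ) (hq : 0 < q) (hq2 : q ≤ 2)
    (hs : 0 < s) (hs1 : s < 1) {c : ℝ}
    (h : (∫ t in Ioo (0:ℝ) 1, (t + (s + Real.sqrt q)) ^ (-(2*η)) * t ^ (2*γ-1)) ≤ c) :
    Real.sqrt (∫ t in Ioo (0:ℝ) 1, t ^ (2*γ-1) / ((t+s)^2+q)^η) ≤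
      Real.sqrt (2^|η|) * Real.sqrt c := by
  have step1 := aux_inner_le hγ hq hq2 hs hs1 (η := η)
  have h2 : (∫ t in Ioo (0:ℝ) 1, t ^ (2*γ-1) / ((t+s)^2+q)^η) ≤ 2^|η| * c :=
    step1.trans (mul_le_mul_of_nonneg_left h (Real.rpow_nonneg (by norm_num) _))
  exact (Real.sqrt_le_sqrt h2).trans
    (le_of_eq (Real.sqrt_mul (Real.rpow_nonneg (by norm_num) _) c))

lemma aux_flat_outer {η ξ γ : ℝ} (hξ : -1 < ξ) (hγ : 0 < γ) {q : ℝ} (hq : 0 < q) (hq2 : q ≤ 2)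
    {M : ℝ} (hM : 0 ≤ M)
    (hpt : ∀ s : ℝ, 0 < s → s < 1 →
      Real.sqrt (∫ t in Ioo (0 : ℝ) 1, t ^ (2 * γ - 1) / ((t + s) ^ 2 + q) ^ η) ≤ M) :
    (∫ s in Ioo (0 : ℝ) 1,
        Real.sqrt (∫ t in Ioo (0 : ℝ) 1, t ^ (2 * γ - 1) / ((t + s) ^ 2 + q) ^ η) * s ^ ξ)
      ≤ M * (1 / (0 + ξ + 1)) := by
  have hr : 0 < Real.sqrt q := Real.sqrt_pos.mpr hq
  have hr2 : Real.sqrt q ≤ 2 := aux_sqrt4 hq hq2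
  have hpt' : ∀ s, 0 < s → s < 1 →
      Real.sqrt (∫ t in Ioo (0 : ℝ) 1, t ^ (2 * γ - 1) / ((t + s) ^ 2 + q) ^ η) ≤
        M * (s + Real.sqrt q) ^ (0:ℝ) := by
    intro s hs hs1
    rw [Real.rpow_zero, mul_one]
    exact hpt s hs hs1
  refine (aux_outer hξ hr (by linarith) hM le_rfl hpt').trans ?_
  exact mul_le_mul_of_nonneg_left
    (aux_master_gt hξ le_rfl (by linarith) hr) hM

lemma aux_case2 (η ξ γ : ℝ) (hξ : -1 < ξ) (hγ : 0 < γ) (hcase : η - ξ - γ ≤ 1) :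
    ∃ C : ℝ, 0 < C ∧ ∀ q : ℝ, 0 < q → q ≤ 2 →
      (∫ s in Ioo (0 : ℝ) 1,
          Real.sqrt (∫ t in Ioo (0 : ℝ) 1, t ^ (2 * γ - 1) / ((t + s) ^ 2 + q) ^ η) * s ^ ξ)
        ≤ C * Real.log (4 / q) := by
  have hlog2 : 0 < Real.log 2 := Real.log_pos one_lt_two
  have hξ1 : 0 < 1 / (0 + ξ + 1) := one_div_pos.mpr (by linarith)
  suffices h : ∃ D1 D2 : ℝ, 0 ≤ D1 ∧ 0 ≤ D2 ∧ ∀ q : ℝ, 0 < q → q ≤ 2 →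
      (∫ s in Ioo (0 : ℝ) 1,
          Real.sqrt (∫ t in Ioo (0 : ℝ) 1, t ^ (2 * γ - 1) / ((t + s) ^ 2 + q) ^ η) * s ^ ξ)
        ≤ D1 + D2 * Real.log (4 / Real.sqrt q) by
    obtain ⟨D1, D2, h1, h2, hb⟩ := h
    have hC : 0 ≤ D1 / Real.log 2 + 2 * D2 := by
      have := div_nonneg h1 hlog2.le; linarith
    refine ⟨D1 / Real.log 2 + 2 * D2 + 1, by linarith, ?_⟩
    intro q hq hq2
    have hlogq : 0 < Real.log (4 / q) := Real.log_pos (by rw [lt_div_iff₀ hq]; linarith)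
    calc _ ≤ D1 + D2 * Real.log (4 / Real.sqrt q) := hb q hq hq2
      _ ≤ (D1 / Real.log 2 + 2 * D2) * Real.log (4 / q) := aux_logconv hq hq2 h1 h2
      _ ≤ (D1 / Real.log 2 + 2 * D2 + 1) * Real.log (4 / q) := by nlinarith
  have hsq : (0:ℝ) ≤ Real.sqrt (2 ^ |η|) := Real.sqrt_nonneg _
  rcases lt_trichotomy η γ with hlt | heq | hgt
  · -- η < γ : uniform constant bound
    rcases le_or_gt η 0 with hη0 | hη0
    · -- η ≤ 0
      have hc : (0:ℝ) ≤ 5 ^ (-(2*η)) * (1/(2*γ-1+1)) :=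
        mul_nonneg (Real.rpow_nonneg (by norm_num) _) (le_of_lt (one_div_pos.mpr (by linarith)))
      refine ⟨Real.sqrt (2 ^ |η|) * Real.sqrt (5 ^ (-(2*η)) * (1/(2*γ-1+1))) * (1/(0+ξ+1)),
        0, mul_nonneg (mul_nonneg hsq (Real.sqrt_nonneg _)) hξ1.le, le_rfl, ?_⟩
      intro q hq hq2
      have hb : ∀ s : ℝ, 0 < s → s < 1 →
          Real.sqrt (∫ t in Ioo (0 : ℝ) 1, t ^ (2 * γ - 1) / ((t + s) ^ 2 + q) ^ η) ≤
            Real.sqrt (2 ^ |η|) * Real.sqrt (5 ^ (-(2*η)) * (1/(2*γ-1+1))) := by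
        intro s hs hs1
        have hr : 0 < Real.sqrt q := Real.sqrt_pos.mpr hq
        have hr2 : Real.sqrt q ≤ 2 := aux_sqrt4 hq hq2
        exact aux_sqrt_inner hγ hq hq2 hs hs1
          (aux_master_pos (by linarith) (by linarith) (by linarith) (by linarith))
      have := aux_flat_outer hξ hγ hq hq2
        (mul_nonneg hsq (Real.sqrt_nonneg _)) hb
      exact this.trans (le_of_eq (by ring))
    · -- 0 < η < γ
      have hc : (0:ℝ) ≤ 1/(-(2*η) + (2*γ-1) + 1) := le_of_lt (one_div_pos.mpr (by linarith))
      refine ⟨Real.sqrt (2 ^ |η|) * Real.sqrt (1/(-(2*η) + (2*γ-1) + 1)) * (1/(0+ξ+1)),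
        0, mul_nonneg (mul_nonneg hsq (Real.sqrt_nonneg _)) hξ1.le, le_rfl, ?_⟩
      intro q hq hq2
      have hb : ∀ s : ℝ, 0 < s → s < 1 →
          Real.sqrt (∫ t in Ioo (0 : ℝ) 1, t ^ (2 * γ - 1) / ((t + s) ^ 2 + q) ^ η) ≤
            Real.sqrt (2 ^ |η|) * Real.sqrt (1/(-(2*η) + (2*γ-1) + 1)) := by
        intro s hs hs1
        have hr : 0 < Real.sqrt q := Real.sqrt_pos.mpr hq
        exact aux_sqrt_inner hγ hq hq2 hs hs1
          (aux_master_gt (by linarith) (by linarith) (by linarith) (by linarith))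
      have := aux_flat_outer hξ hγ hq hq2
        (mul_nonneg hsq (Real.sqrt_nonneg _)) hb
      exact this.trans (le_of_eq (by ring))
  · -- η = γ
    subst heq
    refine ⟨Real.sqrt (2 ^ |η|) * (Real.sqrt (1/(2*η-1+1)) + 1) * (1/(0+ξ+1)),
      Real.sqrt (2 ^ |η|) * (1/(0+ξ+1)), ?_, mul_nonneg hsq hξ1.le, ?_⟩
    · refine mul_nonneg (mul_nonneg hsq ?_) hξ1.le
      have := Real.sqrt_nonneg (1/(2*η-1+1)); linarith
    · intro q hq hq2
      have hr : 0 < Real.sqrt q := Real.sqrt_pos.mpr hq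
      have hr2 : Real.sqrt q ≤ 2 := aux_sqrt4 hq hq2
      have hlogr : 0 ≤ Real.log (4 / Real.sqrt q) :=
        Real.log_nonneg (by rw [le_div_iff₀ hr]; linarith)
      have hb : ∀ s : ℝ, 0 < s → s < 1 →
          Real.sqrt (∫ t in Ioo (0 : ℝ) 1, t ^ (2 * η - 1) / ((t + s) ^ 2 + q) ^ η) ≤
            Real.sqrt (2 ^ |η|) *
              (Real.sqrt (1/(2*η-1+1)) + 1 + Real.log (4 / Real.sqrt q)) := by
        intro s hs hs1
        have ha : 0 < s + Real.sqrt q := by linarith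
        have ha4 : s + Real.sqrt q ≤ 4 := by linarith
        have hlog_a : 0 ≤ Real.log (4 / (s + Real.sqrt q)) :=
          Real.log_nonneg (by rw [le_div_iff₀ ha]; linarith)
        have hmono : Real.log (4 / (s + Real.sqrt q)) ≤ Real.log (4 / Real.sqrt q) := by
          apply Real.log_le_log (by positivity)
          apply div_le_div_of_nonneg_left (by norm_num) hr (by linarith)
        have hco : (0:ℝ) ≤ 1/(2*η-1+1) := le_of_lt (one_div_pos.mpr (by linarith))
        have step := aux_sqrt_inner hγ hq hq2 hs hs1
          (aux_master_eq (p := 2*η-1) (E := -(2*η)) (by linarith) (by linarith)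
            (by ring) ha ha4)
        refine step.trans (mul_le_mul_of_nonneg_left ?_ hsq)
        calc Real.sqrt (1/(2*η-1+1) + Real.log (4/(s+Real.sqrt q)))
            ≤ Real.sqrt (1/(2*η-1+1)) + Real.sqrt (Real.log (4/(s+Real.sqrt q))) :=
              aux_sqrt_add hco hlog_a
          _ ≤ Real.sqrt (1/(2*η-1+1)) + (1 + Real.log (4/(s+Real.sqrt q))) :=
              add_le_add le_rfl (aux_sqrt_le_one_add hlog_a)
          _ ≤ Real.sqrt (1/(2*η-1+1)) + 1 + Real.log (4 / Real.sqrt q) := by linarith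
      have hMq : 0 ≤ Real.sqrt (2 ^ |η|) *
          (Real.sqrt (1/(2*η-1+1)) + 1 + Real.log (4 / Real.sqrt q)) := by
        apply mul_nonneg hsq
        have := Real.sqrt_nonneg (1/(2*η-1+1)); linarith
      have := aux_flat_outer hξ hγ hq hq2 hMq hb
      refine this.trans (le_of_eq (by ring))
  · -- γ < η
    have hK1pos : 0 < 1/(2*γ-1+1) + 1/(-(-(2*η) + (2*γ-1) + 1)) := by
      apply add_pos (one_div_pos.mpr (by linarith)) (one_div_pos.mpr (by linarith))
    set M : ℝ := Real.sqrt (2 ^ |η|) *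
      Real.sqrt (1/(2*γ-1+1) + 1/(-(-(2*η) + (2*γ-1) + 1))) with hMdef
    have hM : 0 ≤ M := mul_nonneg hsq (Real.sqrt_nonneg _)
    rcases eq_or_lt_of_le (show (-1:ℝ) ≤ (γ - η) + ξ by linarith) with hEq | hLt
    · -- (γ-η)+ξ = -1 : log case
      refine ⟨M * (1/(ξ+1)), M, mul_nonneg hM (le_of_lt (one_div_pos.mpr (by linarith))),
        hM, ?_⟩
      intro q hq hq2
      have hr : 0 < Real.sqrt q := Real.sqrt_pos.mpr hq
      have hr2 : Real.sqrt q ≤ 2 := aux_sqrt4 hq hq2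
      have hpt := aux_pt_lt hγ hgt hq hq2 (η := η)
      have houter := aux_outer hξ hr (by linarith) hM (by linarith : γ - η ≤ 0) hpt
      have hmaster := aux_master_eq (p := ξ) (E := γ - η) hξ (by linarith)
        (by linarith) hr (by linarith)
      refine houter.trans ?_
      calc M * ∫ s in Ioo (0:ℝ) 1, (s + Real.sqrt q) ^ (γ - η) * s ^ ξ
          ≤ M * (1/(ξ+1) + Real.log (4 / Real.sqrt q)) :=
            mul_le_mul_of_nonneg_left hmaster hM
        _ = M * (1/(ξ+1)) + M * Real.log (4 / Real.sqrt q) := by ring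
    · -- -1 < (γ-η)+ξ : uniform bound again
      refine ⟨M * (1/((γ-η) + ξ + 1)), 0,
        mul_nonneg hM (le_of_lt (one_div_pos.mpr (by linarith))), le_rfl, ?_⟩
      intro q hq hq2
      have hr : 0 < Real.sqrt q := Real.sqrt_pos.mpr hq
      have hr2 : Real.sqrt q ≤ 2 := aux_sqrt4 hq hq2
      have hpt := aux_pt_lt hγ hgt hq hq2 (η := η)
      have houter := aux_outer hξ hr (by linarith) hM (by linarith : γ - η ≤ 0) hpt
      have hmaster := aux_master_gt (p := ξ) (E := γ - η) hξ (by linarith) hLt hr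
      refine houter.trans ?_
      have := mul_le_mul_of_nonneg_left hmaster hM
      exact this.trans (le_of_eq (by ring))

end

/-- The elementary integral estimate of Lemma 3.6: for `η ∈ ℝ`, `ξ > -1`
and `γ > 0`, uniformly in `q ∈ (0,2]`,
`∫_0^1 (∫_0^1 t^{2γ-1}/((t+s)²+q)^η dt)^{1/2} s^ξ ds ≲ q^{-(η-ξ-γ-1)/2}` if `η-ξ-γ > 1`,
and `≲ log(4/q)` if `η-ξ-γ ≤ 1`. -/
theorem statement18
    (η ξ γ : ℝ) (hξ : -1 < ξ) (hγ : 0 < γ) :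
    ∃ C : ℝ, 0 < C ∧ ∀ q : ℝ, 0 < q → q ≤ 2 →
      (1 < η - ξ - γ →
        (∫ s in Ioo (0 : ℝ) 1,
            Real.sqrt (∫ t in Ioo (0 : ℝ) 1, t ^ (2 * γ - 1) / ((t + s) ^ 2 + q) ^ η) *
              s ^ ξ) ≤
          C * q ^ (-(η - ξ - γ - 1) / 2)) ∧
      (η - ξ - γ ≤ 1 →
        (∫ s in Ioo (0 : ℝ) 1,
            Real.sqrt (∫ t in Ioo (0 : ℝ) 1, t ^ (2 * γ - 1) / ((t + s) ^ 2 + q) ^ η) *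
              s ^ ξ) ≤
          C * Real.log (4 / q)) := by
  rcases le_or_gt (η - ξ - γ) 1 with hle | hgt
  · obtain ⟨C, hC, hb⟩ := aux_case2 η ξ γ hξ hγ hle
    exact ⟨C, hC, fun q hq hq2 => ⟨fun h => absurd h (not_lt.mpr hle), fun _ => hb q hq hq2⟩⟩
  · obtain ⟨C, hC, hb⟩ := aux_case1 η ξ γ hξ hγ hgt
    exact ⟨C, hC, fun q hq hq2 => ⟨fun _ => hb q hq hq2, fun h => absurd hgt (not_lt.mpr h)⟩⟩

end JacobiPaper
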